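/- arXiv:1407.0156 — 4 statements merged into one kernel-verified Lean document; each statement's English description precedes it below -/
import Mathlib

section
/- Let 1 < p < ∞ and ψ : [0,1] → [0,∞) be measurable with ∫₀¹ t^{-d/p} ψ(t) dt < ∞. Then the weighted Hardy operator U_ψ f(x) = ∫₀¹ f(tx) ψ(t) dt is bounded on L^p(ℝ^d) with operator norm at most ∫₀¹ t^{-d/p} ψ(t) dt; that is, ‖U_ψ f‖_{L^p} ≤ (∫₀¹ t^{-d/p} ψ(t) dt) ‖f‖_{L^p} for all f ∈ L^p(ℝ^d). -/
open MeasureTheory Metric Set ENNReal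

/-!
Pointwise `|U_ψ f(x)| ≤ ∫ |f(tx)| dν(t)` with `ν = ψ(t) dt` on `[0,1]`. Jensen's inequality
for the weighted measure `t^{-d/p} dν`, whose total mass is `A`, gives
`(∫ |f(tx)| dν)^p ≤ A^{p-1} ∫ t^{d-d/p} |f(tx)|^p dν(t)`. Integrating in `x`, Tonelli and
`∫ |f(tx)|^p dx = t^{-d} ‖f‖_p^p` turn the right-hand side into `A^p ‖f‖_p^p`.
-/

/-- The weighted Hardy operator `U_ψ f (x) = ∫₀¹ f (t x) ψ(t) dt`. -/
noncomputable def hardyOp (d : ℕ) (ψ : ℝ → ℝ) (f : EuclideanSpace ℝ (Fin d) → ℂ) :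
    EuclideanSpace ℝ (Fin d) → ℂ :=
  fun x => ∫ t in Set.Icc (0 : ℝ) 1, (ψ t : ℂ) * f (t • x)

theorem rpow_lintegral_le_measure_univ_mul_lintegral_rpow {α : Type*} [MeasurableSpace α]
    {μ : Measure α} {p : ℝ} (hp : 1 ≤ p) {f : α → ℝ≥0∞} (hf : AEMeasurable f μ) :
    (∫⁻ a, f a ∂μ) ^ p ≤ μ univ ^ (p - 1) * ∫⁻ a, f a ^ p ∂μ := by
  have hp0 : 0 < p := zero_lt_one.trans_le hp
  have h := eLpNorm'_le_eLpNorm'_mul_rpow_measure_univ zero_lt_one hp hf.aestronglyMeasurable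
  simp only [eLpNorm'_eq_lintegral_enorm, enorm_eq_self, rpow_one, div_one] at h
  calc (∫⁻ a, f a ∂μ) ^ p
      ≤ ((∫⁻ a, f a ^ p ∂μ) ^ (1 / p) * μ univ ^ (1 - 1 / p)) ^ p := by gcongr
    _ = μ univ ^ (p - 1) * ∫⁻ a, f a ^ p ∂μ := by
      rw [mul_rpow_of_nonneg _ _ hp0.le, ← rpow_mul, ← rpow_mul, one_div_mul_cancel hp0.ne',
        rpow_one, mul_comm, sub_mul, one_div_mul_cancel hp0.ne', one_mul]

theorem rpow_lintegral_le_weighted_lintegral_rpow {α : Type*} [MeasurableSpace α]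
    {ν : Measure α} {p : ℝ} (hp : 1 ≤ p) {w h : α → ℝ≥0∞} (hw : Measurable w) (hh : Measurable h)
    (hw₀ : ∀ᵐ a ∂ν, w a ≠ 0) (hw_top : ∀ᵐ a ∂ν, w a ≠ ∞) :
    (∫⁻ a, h a ∂ν) ^ p ≤ (∫⁻ a, w a ∂ν) ^ (p - 1) * ∫⁻ a, w a ^ (1 - p) * h a ^ p ∂ν := by
  have hp0 : 0 < p := zero_lt_one.trans_le hp
  have hmass : ν.withDensity w univ = ∫⁻ a, w a ∂ν := by
    rw [withDensity_apply _ MeasurableSet.univ, Measure.restrict_univ]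
  have hunweight : ∫⁻ a, h a ∂ν = ∫⁻ a, (w a)⁻¹ * h a ∂ν.withDensity w := by
    rw [lintegral_withDensity_eq_lintegral_mul _ hw (by fun_prop)]
    refine lintegral_congr_ae ?_
    filter_upwards [hw₀, hw_top] with a ha₀ ha_top
    rw [Pi.mul_apply, ← mul_assoc, ENNReal.mul_inv_cancel ha₀ ha_top, one_mul]
  have hreweight : ∫⁻ a, ((w a)⁻¹ * h a) ^ p ∂ν.withDensity w =
      ∫⁻ a, w a ^ (1 - p) * h a ^ p ∂ν := by
    rw [lintegral_withDensity_eq_lintegral_mul _ hw (by fun_prop)]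
    refine lintegral_congr_ae ?_
    filter_upwards [hw₀, hw_top] with a ha₀ ha_top
    rw [Pi.mul_apply, mul_rpow_of_nonneg _ _ hp0.le, inv_rpow, ← rpow_neg, ← mul_assoc,
      sub_eq_add_neg, rpow_add _ _ ha₀ ha_top, rpow_one]
  rw [hunweight, ← hreweight, ← hmass]
  exact rpow_lintegral_le_measure_univ_mul_lintegral_rpow hp (by fun_prop)

section Dilation

variable {E : Type*} [NormedAddCommGroup E] [NormedSpace ℝ E] [FiniteDimensional ℝ E]
  [MeasurableSpace E] [BorelSpace E] (μ : Measure E) [μ.IsAddHaarMeasure]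

theorem quasiMeasurePreserving_smul_prod {ν : Measure ℝ} [SFinite ν] (hν : ∀ᵐ t ∂ν, t ≠ 0) :
    Measure.QuasiMeasurePreserving (fun z : E × ℝ => z.2 • z.1) (μ.prod ν) μ := by
  have hφ : Measurable (fun z : E × ℝ => z.2 • z.1) := measurable_snd.smul measurable_fst
  refine ⟨hφ, Measure.AbsolutelyContinuous.mk fun N hN hμN => ?_⟩
  rw [Measure.map_apply hφ hN, Measure.prod_apply_symm (hφ hN)]
  refine (lintegral_congr_ae ?_).trans lintegral_zero
  filter_upwards [hν] with t ht
  exact (Measure.addHaar_preimage_smul μ ht N).trans (by rw [hμN, mul_zero])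

theorem lintegral_comp_smul {g : E → ℝ≥0∞} (hg : Measurable g) {t : ℝ} (ht : t ≠ 0) :
    ∫⁻ x, g (t • x) ∂μ = ENNReal.ofReal |(t ^ Module.finrank ℝ E)⁻¹| * ∫⁻ x, g x ∂μ := by
  rw [← lintegral_map hg (measurable_const_smul t), Measure.map_addHaar_smul μ ht,
    lintegral_smul_measure, smul_eq_mul]

theorem lintegral_rpow_lintegral_comp_smul_le {ν : Measure ℝ} [SFinite ν]
    (hν : ∀ᵐ t ∂ν, 0 < t) {p : ℝ} (hp : 1 ≤ p) {g : E → ℝ≥0∞} (hg : Measurable g) :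
    ∫⁻ x, (∫⁻ t, g (t • x) ∂ν) ^ p ∂μ ≤
      (∫⁻ t, ENNReal.ofReal (t ^ (-(Module.finrank ℝ E : ℝ) / p)) ∂ν) ^ p *
        ∫⁻ x, g x ^ p ∂μ := by
  set n : ℕ := Module.finrank ℝ E
  set w : ℝ → ℝ≥0∞ := fun t => ENNReal.ofReal (t ^ (-(n : ℝ) / p))
  set G := ∫⁻ x, g x ^ p ∂μ
  have hw : Measurable w := (measurable_id.pow_const _).ennreal_ofReal
  have hdil : ∀ᵐ t ∂ν, w t ^ (1 - p) * ∫⁻ x, g (t • x) ^ p ∂μ = w t * G := by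
    filter_upwards [hν] with t ht
    rw [lintegral_comp_smul μ (hg.pow_const p) ht.ne', ← mul_assoc,
      ofReal_rpow_of_pos (by positivity), ← Real.rpow_mul ht.le, abs_of_pos (by positivity),
      ← ofReal_mul (by positivity), ← Real.rpow_natCast, ← Real.rpow_neg ht.le, ← Real.rpow_add ht]
    congr 3
    field_simp
    ring
  calc ∫⁻ x, (∫⁻ t, g (t • x) ∂ν) ^ p ∂μ
      ≤ ∫⁻ x, (∫⁻ t, w t ∂ν) ^ (p - 1) * ∫⁻ t, w t ^ (1 - p) * g (t • x) ^ p ∂ν ∂μ := by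
        refine lintegral_mono fun x =>
          rpow_lintegral_le_weighted_lintegral_rpow hp hw (by fun_prop) ?_ ?_
        · filter_upwards [hν] with t ht using by positivity
        · exact ae_of_all _ fun t => ofReal_ne_top
    _ = (∫⁻ t, w t ∂ν) ^ (p - 1) * ∫⁻ t, w t ^ (1 - p) * ∫⁻ x, g (t • x) ^ p ∂μ ∂ν := by
        rw [lintegral_const_mul _ (by fun_prop), lintegral_lintegral_swap (by fun_prop)]
        congr 1
        exact lintegral_congr fun t => lintegral_const_mul _ (by fun_prop)
    _ = (∫⁻ t, w t ∂ν) ^ p * G := by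
        rw [lintegral_congr_ae hdil, lintegral_mul_const _ hw, ← mul_assoc]
        congr 1
        nth_rw 2 [← rpow_one (∫⁻ t, w t ∂ν)]
        rw [← rpow_add_of_nonneg _ _ (by linarith) zero_le_one, sub_add_cancel]

end Dilation

theorem hardyOp_congr_ae {d : ℕ} (ψ : ℝ → ℝ) {f g : EuclideanSpace ℝ (Fin d) → ℂ}
    (hfg : f =ᵐ[volume] g) : hardyOp d ψ f =ᵐ[volume] hardyOp d ψ g := by
  have hφ := quasiMeasurePreserving_smul_prod (volume : Measure (EuclideanSpace ℝ (Fin d)))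
    (ae_restrict_of_ae (Measure.ae_ne volume 0) :
      ∀ᵐ t ∂volume.restrict (Icc (0 : ℝ) 1), t ≠ 0)
  filter_upwards [Measure.ae_ae_of_ae_prod (hφ.ae_eq_comp hfg)] with x hx
  exact integral_congr_ae (hx.mono fun t ht => congrArg ((ψ t : ℂ) * ·) ht)

theorem enorm_hardyOp_le {d : ℕ} {ψ : ℝ → ℝ} (hψmeas : Measurable ψ)
    (hψnonneg : ∀ t ∈ Icc (0 : ℝ) 1, 0 ≤ ψ t) {f : EuclideanSpace ℝ (Fin d) → ℂ}
    (hf : Measurable f) (x : EuclideanSpace ℝ (Fin d)) :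
    ‖hardyOp d ψ f x‖ₑ ≤
      ∫⁻ t, ‖f (t • x)‖ₑ ∂(volume.restrict (Icc (0 : ℝ) 1)).withDensity
        fun t => ENNReal.ofReal (ψ t) := by
  rw [lintegral_withDensity_eq_lintegral_mul _ (by fun_prop) (by fun_prop)]
  refine (enorm_integral_le_lintegral_enorm _).trans_eq
    (setLIntegral_congr_fun measurableSet_Icc fun t ht => ?_)
  rw [Pi.mul_apply, enorm_mul, ← ofReal_norm, Complex.norm_real,
    Real.norm_of_nonneg (hψnonneg t ht)]

theorem hardyOp_bounded_general (d : ℕ) (p : ℝ) (hp : 1 < p)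
    (ψ : ℝ → ℝ) (hψmeas : Measurable ψ) (hψnonneg : ∀ t ∈ Set.Icc (0 : ℝ) 1, 0 ≤ ψ t)
    (A : ℝ≥0∞)
    (hA : A = ∫⁻ t in Set.Icc (0 : ℝ) 1, ENNReal.ofReal (t ^ (-(d : ℝ) / p) * ψ t)) :
    ∀ f : EuclideanSpace ℝ (Fin d) → ℂ, MemLp f (ENNReal.ofReal p) volume →
      eLpNorm (hardyOp d ψ f) (ENNReal.ofReal p) volume ≤
        A * eLpNorm f (ENNReal.ofReal p) volume := by
  intro f hf
  obtain ⟨g, hg, hfg⟩ := hf.aestronglyMeasurable.aemeasurable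
  have hp0 : 0 < p := zero_lt_one.trans hp
  set ν := (volume.restrict (Icc (0 : ℝ) 1)).withDensity fun t => ENNReal.ofReal (ψ t)
  have hν : ∀ᵐ t ∂ν, 0 < t := by
    refine withDensity_absolutelyContinuous _ _ ?_
    filter_upwards [ae_restrict_mem measurableSet_Icc,
      ae_restrict_of_ae (Measure.ae_ne volume 0)] with t ht ht₀ using ht.1.lt_of_ne' ht₀
  have hνA : ∫⁻ t, ENNReal.ofReal (t ^ (-(d : ℝ) / p)) ∂ν = A := by
    rw [hA, lintegral_withDensity_eq_lintegral_mul _ (by fun_prop) (by fun_prop)]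
    refine setLIntegral_congr_fun measurableSet_Icc fun t ht => ?_
    rw [Pi.mul_apply, ← ofReal_mul (hψnonneg t ht), mul_comm]
  have hbound := lintegral_rpow_lintegral_comp_smul_le volume hν hp.le hg.enorm
  rw [finrank_euclideanSpace_fin, hνA] at hbound
  rw [eLpNorm_congr_ae (hardyOp_congr_ae ψ hfg), eLpNorm_congr_ae hfg,
    eLpNorm_eq_lintegral_rpow_enorm_toReal (by simpa using hp0) ofReal_ne_top,
    eLpNorm_eq_lintegral_rpow_enorm_toReal (by simpa using hp0) ofReal_ne_top,
    toReal_ofReal hp0.le]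
  calc (∫⁻ x, ‖hardyOp d ψ g x‖ₑ ^ p) ^ (1 / p)
      ≤ (A ^ p * ∫⁻ x, ‖g x‖ₑ ^ p) ^ (1 / p) := by
        gcongr ?_ ^ _
        refine (lintegral_mono fun x => ?_).trans hbound
        gcongr
        exact enorm_hardyOp_le hψmeas hψnonneg hg x
    _ = A * (∫⁻ x, ‖g x‖ₑ ^ p) ^ (1 / p) := by
        rw [mul_rpow_of_nonneg _ _ (by positivity), ← rpow_mul, mul_one_div_cancel hp0.ne',
          rpow_one]

/-- Sufficiency and norm bound for the weighted Hardy operator on `L^p(ℝ^d)`. -/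
theorem hardyOp_bounded (d : ℕ) (hd : 0 < d) (p : ℝ) (hp : 1 < p)
    (ψ : ℝ → ℝ) (hψmeas : Measurable ψ) (hψnonneg : ∀ t ∈ Set.Icc (0 : ℝ) 1, 0 ≤ ψ t)
    (A : ℝ≥0∞)
    (hA : A = ∫⁻ t in Set.Icc (0 : ℝ) 1, ENNReal.ofReal (t ^ (-(d : ℝ) / p) * ψ t))
    (hAfin : A ≠ ⊤) :
    ∀ f : EuclideanSpace ℝ (Fin d) → ℂ, MemLp f (ENNReal.ofReal p) volume →
      eLpNorm (hardyOp d ψ f) (ENNReal.ofReal p) volume ≤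
        A * eLpNorm f (ENNReal.ofReal p) volume :=
  hardyOp_bounded_general d p hp ψ hψmeas hψnonneg A hA
end

section
/- Hardy's integral inequality: for 1 < p < ∞ and f ∈ L^p(ℝ), the Hardy operator Sf(x) = (1/x) ∫₀^x f(t) dt satisfies ‖Sf‖_{L^p(ℝ)} ≤ (p/(p−1)) ‖f‖_{L^p(ℝ)}. -/
open MeasureTheory Metric Set ENNReal

/-!
`Sf(x) = ∫₀¹ f(t x) dt` is an average of the dilates `f(t ·)`, and
`‖f(t ·)‖_p = t^(-1/p) ‖f‖_p`.
Minkowski's integral inequality therefore gives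
`‖Sf‖_p ≤ (∫₀¹ t^(-1/p) dt) ‖f‖_p = p/(p-1) ‖f‖_p`.
Minkowski's inequality itself follows from Hölder's inequality by duality against `(∫ F)^(p-1)`,
after truncating to finite-measure sets and bounded heights so that one may divide.
-/

namespace ENNReal

theorem rpow_one_div_le_of_le_mul_rpow {p q : ℝ} (hpq : p.HolderConjugate q) {a K : ℝ≥0∞}
    (ha : a ≠ ∞) (h : a ≤ K * a ^ (1 / q)) : a ^ (1 / p) ≤ K := by
  rcases eq_or_ne a 0 with rfl | ha0
  · simp [hpq.pos]
  have hsplit : a ^ (1 / p) * a ^ (1 / q) = a := by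
    rw [← rpow_add _ _ ha0 ha, one_div, one_div, hpq.inv_add_inv_eq_one, rpow_one]
  exact (ENNReal.mul_le_mul_iff_left (rpow_pos (pos_iff_ne_zero.2 ha0) ha).ne'
    (rpow_ne_top_of_nonneg hpq.symm.one_div_nonneg ha)).1 (hsplit.trans_le h)

theorem iSup_min_natCast_rpow (a : ℝ≥0∞) {p : ℝ} (hp : 0 < p) :
    ⨆ n : ℕ, min a n ^ p = a ^ p := by
  have := (orderIsoRpow p hp).map_iSup fun n : ℕ => min a n
  simp only [orderIsoRpow_apply] at this
  rw [← this, ← inf_iSup_eq, iSup_natCast, inf_top_eq]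

end ENNReal

section Minkowski

variable {α β : Type*} [MeasurableSpace α] [MeasurableSpace β] {μ : Measure α} {ν : Measure β}
  {p : ℝ} {F : α → β → ℝ≥0∞}

theorem rpow_lintegral_rpow_le_of_le_lintegral [SFinite μ] [SFinite ν] (hp : 1 < p)
    (hF : Measurable (Function.uncurry F)) {h : α → ℝ≥0∞} (hh : Measurable h)
    (h_le : ∀ x, h x ≤ ∫⁻ t, F x t ∂ν) (h_fin : ∫⁻ x, h x ^ p ∂μ ≠ ∞) :
    (∫⁻ x, h x ^ p ∂μ) ^ (1 / p) ≤ ∫⁻ t, (∫⁻ x, F x t ^ p ∂μ) ^ (1 / p) ∂ν := by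
  have hpq : p.HolderConjugate (p / (p - 1)) := .conjExponent hp
  refine ENNReal.rpow_one_div_le_of_le_mul_rpow hpq h_fin ?_
  have hpow (x : α) : h x ^ p = h x ^ (p - 1) * h x := by
    conv_lhs => rw [← sub_add_cancel p 1]
    rw [ENNReal.rpow_add_of_nonneg _ _ (by linarith) zero_le_one, ENNReal.rpow_one]
  have hconj (x : α) : (h x ^ (p - 1)) ^ (p / (p - 1)) = h x ^ p := by
    rw [← ENNReal.rpow_mul, hpq.sub_one_mul_conj]
  calc ∫⁻ x, h x ^ p ∂μ
      ≤ ∫⁻ x, ∫⁻ t, F x t * h x ^ (p - 1) ∂ν ∂μ := by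
        refine lintegral_mono fun x => ?_
        rw [hpow, lintegral_mul_const _ hF.of_uncurry_left, mul_comm]
        gcongr
        exact h_le x
    _ = ∫⁻ t, ∫⁻ x, F x t * h x ^ (p - 1) ∂μ ∂ν :=
        lintegral_lintegral_swap (hF.mul ((hh.pow_const _).comp measurable_fst)).aemeasurable
    _ ≤ ∫⁻ t, (∫⁻ x, F x t ^ p ∂μ) ^ (1 / p) * (∫⁻ x, h x ^ p ∂μ) ^ (1 / (p / (p - 1)))
          ∂ν := by
        refine lintegral_mono fun t => ?_
        simpa only [Pi.mul_apply, hconj] using ENNReal.lintegral_mul_le_Lp_mul_Lq μ hpq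
          (f := fun x => F x t) (g := fun x => h x ^ (p - 1))
          hF.of_uncurry_right.aemeasurable (hh.pow_const _).aemeasurable
    _ = _ := lintegral_mul_const' _ _ (rpow_ne_top_of_nonneg (by positivity) h_fin)

theorem lintegral_rpow_lintegral_le [SigmaFinite μ] [SFinite ν] (hp : 1 < p)
    (hF : Measurable (Function.uncurry F)) :
    (∫⁻ x, (∫⁻ t, F x t ∂ν) ^ p ∂μ) ^ (1 / p) ≤ ∫⁻ t, (∫⁻ x, F x t ^ p ∂μ) ^ (1 / p) ∂ν := by
  have hp0 : 0 < p := by linarith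
  have hG : Measurable fun x => ∫⁻ t, F x t ∂ν := hF.lintegral_prod_right'
  rw [one_div, ENNReal.rpow_inv_le_iff hp0]
  refine lintegral_le_of_forall_fin_meas_le _ fun s _ hμs => ?_
  rw [lintegral_congr fun x => (iSup_min_natCast_rpow (∫⁻ t, F x t ∂ν) hp0).symm,
    lintegral_iSup (fun n => (hG.min measurable_const).pow_const p)
      fun m n hmn x => rpow_le_rpow (min_le_min_left _ (by exact_mod_cast hmn)) hp0.le]
  refine iSup_le fun n => ?_
  have hfin : ∫⁻ x in s, min (∫⁻ t, F x t ∂ν) n ^ p ∂μ ≠ ∞ := by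
    refine ne_top_of_le_ne_top ?_
      (lintegral_mono fun x => rpow_le_rpow (min_le_right _ (n : ℝ≥0∞)) hp0.le)
    rw [setLIntegral_const]
    exact mul_ne_top (rpow_ne_top_of_nonneg hp0.le (natCast_ne_top n)) hμs
  rw [← ENNReal.rpow_inv_le_iff hp0, ← one_div]
  calc _ ≤ ∫⁻ t, (∫⁻ x in s, F x t ^ p ∂μ) ^ (1 / p) ∂ν :=
        rpow_lintegral_rpow_le_of_le_lintegral hp hF (hG.min measurable_const)
          (fun x => min_le_left _ _) hfin
    _ ≤ _ := by gcongr; exact Measure.restrict_le_self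

end Minkowski

theorem lintegral_comp_mul_left (g : ℝ → ℝ≥0∞) {a : ℝ} (ha : a ≠ 0) :
    ∫⁻ x, g (a * x) = ENNReal.ofReal |a⁻¹| * ∫⁻ x, g x := by
  rw [← (measurableEmbedding_mulLeft₀ ha).lintegral_map, Real.map_volume_mul_left ha,
    lintegral_smul_measure, smul_eq_mul]

theorem lintegral_Ioc_zero_one_rpow {s : ℝ} (hs : -1 < s) :
    ∫⁻ t in Ioc (0 : ℝ) 1, ENNReal.ofReal (t ^ s) = ENNReal.ofReal (1 / (s + 1)) := by
  have hint : IntegrableOn (fun t : ℝ => t ^ s) (Ioc 0 1) := by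
    simpa [intervalIntegrable_iff, uIoc_of_le zero_le_one] using
      intervalIntegral.intervalIntegrable_rpow' (a := 0) (b := 1) hs
  rw [← ofReal_integral_eq_lintegral_ofReal hint
    ((ae_restrict_mem measurableSet_Ioc).mono fun t ht => Real.rpow_nonneg ht.1.le _),
    ← intervalIntegral.integral_of_le zero_le_one, integral_rpow (Or.inl hs), Real.one_rpow,
    Real.zero_rpow (by linarith), sub_zero]

theorem lintegral_rpow_hardy_le {p : ℝ} (hp : 1 < p) {g : ℝ → ℝ≥0∞} (hg : Measurable g) :
    (∫⁻ x, (∫⁻ t in Ioc (0 : ℝ) 1, g (t * x)) ^ p) ^ (1 / p) ≤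
      ENNReal.ofReal (p / (p - 1)) * (∫⁻ x, g x ^ p) ^ (1 / p) := by
  have hp0 : 0 < p := by linarith
  have hscaled : ∀ t ∈ Ioc (0 : ℝ) 1, (∫⁻ x, g (t * x) ^ p) ^ (1 / p) =
      ENNReal.ofReal (t ^ (-(1 / p))) * (∫⁻ x, g x ^ p) ^ (1 / p) := by
    intro t ht
    rw [lintegral_comp_mul_left (fun y => g y ^ p) ht.1.ne',
      ENNReal.mul_rpow_of_nonneg _ _ (by positivity), abs_of_pos (inv_pos.2 ht.1),
      ofReal_rpow_of_pos (inv_pos.2 ht.1), Real.inv_rpow ht.1.le, ← Real.rpow_neg ht.1.le]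
  have hconst : ∫⁻ t in Ioc (0 : ℝ) 1, ENNReal.ofReal (t ^ (-(1 / p))) =
      ENNReal.ofReal (p / (p - 1)) := by
    have hinv : 1 / p < 1 := (div_lt_one hp0).2 hp
    rw [lintegral_Ioc_zero_one_rpow (by linarith)]
    congr 1
    field_simp
    ring
  calc _ ≤ ∫⁻ t in Ioc (0 : ℝ) 1, (∫⁻ x, g (t * x) ^ p) ^ (1 / p) :=
        lintegral_rpow_lintegral_le hp (hg.comp (measurable_snd.mul measurable_fst))
    _ = ∫⁻ t in Ioc (0 : ℝ) 1, ENNReal.ofReal (t ^ (-(1 / p))) * (∫⁻ x, g x ^ p) ^ (1 / p) :=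
        setLIntegral_congr_fun measurableSet_Ioc hscaled
    _ = _ := by rw [lintegral_mul_const _ (by fun_prop), hconst]

theorem enorm_setIntegral_Icc_comp_mul_le {E : Type*} [NormedAddCommGroup E] [NormedSpace ℝ E]
    {f f' : ℝ → E} (hff' : f =ᵐ[volume] f') {x : ℝ} (hx : x ≠ 0) :
    ‖∫ t in Icc (0 : ℝ) 1, f (t * x)‖ₑ ≤ ∫⁻ t in Ioc (0 : ℝ) 1, ‖f' (t * x)‖ₑ := by
  have hscale : Measure.QuasiMeasurePreserving (· * x) volume volume :=
    ⟨measurable_mul_const x, by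
      rw [Real.map_volume_mul_right hx]; exact Measure.smul_absolutelyContinuous⟩
  calc _ ≤ ∫⁻ t in Icc (0 : ℝ) 1, ‖f (t * x)‖ₑ := enorm_integral_le_lintegral_enorm _
    _ = ∫⁻ t in Ioc (0 : ℝ) 1, ‖f' (t * x)‖ₑ := by
      rw [Measure.restrict_congr_set Ioc_ae_eq_Icc.symm]
      exact lintegral_congr_ae (ae_restrict_of_ae ((hscale.ae_eq_comp hff').fun_comp _))

/-- Hardy's integral inequality: `‖Sf‖_{L^p(ℝ)} ≤ p/(p-1) ‖f‖_{L^p(ℝ)}`, where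
`Sf(x) = (1/x) ∫₀ˣ f(t) dt = ∫₀¹ f(t x) dt`. -/
theorem hardy_inequality (p : ℝ) (hp : 1 < p) (f : ℝ → ℂ)
    (hf : MemLp f (ENNReal.ofReal p) volume) :
    eLpNorm (fun x : ℝ => ∫ t in Set.Icc (0 : ℝ) 1, f (t * x)) (ENNReal.ofReal p) volume ≤
      ENNReal.ofReal (p / (p - 1)) * eLpNorm f (ENNReal.ofReal p) volume := by
  have hp0 : 0 < p := by linarith
  set g : ℝ → ℝ≥0∞ := fun y => ‖hf.1.mk f y‖ₑ
  have hg : Measurable g := hf.1.stronglyMeasurable_mk.measurable.enorm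
  have hbound : ∀ᵐ x, ‖∫ t in Icc (0 : ℝ) 1, f (t * x)‖ₑ ≤
      ‖∫⁻ t in Ioc (0 : ℝ) 1, g (t * x)‖ₑ := by
    filter_upwards [compl_mem_ae_iff.2 (measure_singleton (0 : ℝ))] with x hx
    exact enorm_setIntegral_Icc_comp_mul_le hf.1.ae_eq_mk hx
  have hP0 : ENNReal.ofReal p ≠ 0 := by simpa using hp0
  calc _ ≤ eLpNorm (fun x => ∫⁻ t in Ioc (0 : ℝ) 1, g (t * x)) (ENNReal.ofReal p) volume :=
        eLpNorm_mono_enorm_ae hbound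
    _ ≤ ENNReal.ofReal (p / (p - 1)) * eLpNorm g (ENNReal.ofReal p) volume := by
        simp only [eLpNorm_eq_lintegral_rpow_enorm_toReal hP0 ofReal_ne_top, enorm_eq_self,
          toReal_ofReal hp0.le]
        exact lintegral_rpow_hardy_le hp hg
    _ = _ := by rw [eLpNorm_enorm, ← eLpNorm_congr_ae hf.1.ae_eq_mk]
end

section
/- Let ω : ℝ^d → [0,∞) be measurable, positive a.e., absolutely homogeneous of degree α > −d, locally integrable, and suppose ω satisfies the doubling property (there exists C with ω(B(x,2r)) ≤ C ω(B(x,r)) for all balls). Then the function x ↦ log|x| belongs to BMO(ω), i.e. sup over balls B of (1/ω(B)) ∫_B |log|x| − c_B| ω(x) dx is finite for suitable constants c_B. -/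
open MeasureTheory Metric Set ENNReal

/-- Integral of a weight over the unit sphere `S_d` with respect to the surface measure. -/
noncomputable def sphereInt (d : ℕ) (ω : EuclideanSpace ℝ (Fin d) → ℝ) : ℝ≥0∞ :=
  ∫⁻ θ : Metric.sphere (0 : EuclideanSpace ℝ (Fin d)) 1, ENNReal.ofReal (ω θ)
    ∂((volume : Measure (EuclideanSpace ℝ (Fin d))).toSphere)

/-- `ω ∈ W_α`: measurable, a.e. positive, absolutely homogeneous of degree `α`, with
finite positive integral over the unit sphere. -/
def memW (d : ℕ) (α : ℝ) (ω : EuclideanSpace ℝ (Fin d) → ℝ) : Prop :=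
  Measurable ω ∧ (∀ᵐ x : EuclideanSpace ℝ (Fin d), 0 < ω x) ∧
    (∀ t : ℝ, t ≠ 0 → ∀ x : EuclideanSpace ℝ (Fin d), ω (t • x) = |t| ^ α * ω x) ∧
    0 < sphereInt d ω ∧ sphereInt d ω < ⊤

/-- The norm of the weighted Lebesgue space `L^p_ω(ℝ^d)`. -/
noncomputable def wLpNorm (d : ℕ) (p : ℝ) (ω : EuclideanSpace ℝ (Fin d) → ℝ)
    (f : EuclideanSpace ℝ (Fin d) → ℂ) : ℝ≥0∞ :=
  (∫⁻ x, (‖f x‖₊ : ℝ≥0∞) ^ p * ENNReal.ofReal (ω x)) ^ (1 / p)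

/-- The weight of a ball: `ω(B(0,R)) = ∫_{B(0,R)} ω`. -/
noncomputable def wBall (d : ℕ) (ω : EuclideanSpace ℝ (Fin d) → ℝ) (R : ℝ) : ℝ≥0∞ :=
  ∫⁻ x in Metric.ball (0 : EuclideanSpace ℝ (Fin d)) R, ENNReal.ofReal (ω x)

/-- The norm of the weighted central Morrey space `Ḃ^{p,λ}_ω(ℝ^d)`. -/
noncomputable def morreyNorm (d : ℕ) (p lam : ℝ) (ω : EuclideanSpace ℝ (Fin d) → ℝ)
    (f : EuclideanSpace ℝ (Fin d) → ℂ) : ℝ≥0∞ :=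
  ⨆ (R : ℝ) (_ : 0 < R),
    ((wBall d ω R) ^ (-(1 + lam * p)) *
      ∫⁻ x in Metric.ball (0 : EuclideanSpace ℝ (Fin d)) R,
        (‖f x‖₊ : ℝ≥0∞) ^ p * ENNReal.ofReal (ω x)) ^ (1 / p)

/-!
Write `ν = ω dx`. Homogeneity gives `ν(B(0, tR)) = t^(d+α) ν(B(0, R))`, and by the layer cake
formula `∫_{B(0,R)} log (R/|y|) dν = ∫_0^∞ ν(B(0, e^{-t} R)) dt = ν(B(0,R)) / (d+α)`.
For a ball `B(x, r)` far from the origin (`2r ≤ |x|`), `log |y|` varies by at most `1` on it.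
For a ball near the origin, `B(x, r) ⊆ B(0, 3r) ⊆ B(x, 8r)`, so taking `c = log (3r)` the mean
oscillation is at most `C³/(d+α)` by three applications of the doubling inequality.
-/

open scoped Pointwise

/-- `MemBMO (volume.withDensity ω) f` is `f ∈ BMO(ω)`, with the weighted mean `f_{B,ω}` replaced by
a constant chosen per ball, which changes the seminorm by a factor of at most `2`. -/
def MemBMO {X : Type*} [PseudoMetricSpace X] [MeasurableSpace X] (ν : Measure X)
    (f : X → ℝ) : Prop :=
  ∃ M : ℝ≥0∞, M ≠ ⊤ ∧ ∀ (x : X) (r : ℝ), 0 < r →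
    ∃ c : ℝ, ∫⁻ y in ball x r, ENNReal.ofReal |f y - c| ∂ν ≤ M * ν (ball x r)

theorem measure_ball_eight_mul_le_of_doubling {X : Type*} [PseudoMetricSpace X]
    [MeasurableSpace X] {ν : Measure X} {C : ℝ≥0∞}
    (hC : ∀ (x : X) (r : ℝ), 0 < r → ν (ball x (2 * r)) ≤ C * ν (ball x r))
    (x : X) {r : ℝ} (hr : 0 < r) :
    ν (ball x (8 * r)) ≤ C ^ 3 * ν (ball x r) :=
  calc ν (ball x (8 * r)) = ν (ball x (2 * (2 * (2 * r)))) := by ring_nf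
    _ ≤ C * ν (ball x (2 * (2 * r))) := hC x _ (by positivity)
    _ ≤ C * (C * ν (ball x (2 * r))) := by gcongr; exact hC x _ (by positivity)
    _ ≤ C * (C * (C * ν (ball x r))) := by gcongr; exact hC x r hr
    _ = C ^ 3 * ν (ball x r) := by ring

theorem abs_log_norm_sub_log_norm_le_one {E : Type*} [SeminormedAddCommGroup E] {x y : E}
    {r : ℝ} (hx : 2 * r ≤ ‖x‖) (hy : y ∈ ball x r) :
    |Real.log ‖y‖ - Real.log ‖x‖| ≤ 1 := by
  have hr : 0 < r := pos_of_mem_ball hy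
  have hdist : |‖y‖ - ‖x‖| < r := (abs_norm_sub_norm_le y x).trans_lt (mem_ball_iff_norm.1 hy)
  obtain ⟨hlow, hup⟩ := abs_lt.1 hdist
  have hxpos : 0 < ‖x‖ := by linarith
  have hypos : 0 < ‖y‖ := by linarith
  rw [← Real.log_div hypos.ne' hxpos.ne', abs_le]
  constructor
  · have h := Real.one_sub_inv_le_log_of_pos (div_pos hypos hxpos)
    have hratio : ‖x‖ / ‖y‖ ≤ 2 := by rw [div_le_iff₀ hypos]; linarith
    rw [inv_div] at h
    linarith
  · have h := Real.log_le_sub_one_of_pos (div_pos hypos hxpos)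
    have hratio : ‖y‖ / ‖x‖ ≤ 2 := by rw [div_le_iff₀ hxpos]; linarith
    linarith

theorem lintegral_Ioi_ofReal_exp_neg_mul {β : ℝ} (hβ : 0 < β) :
    ∫⁻ t in Ioi 0, ENNReal.ofReal (Real.exp (-β * t)) = ENNReal.ofReal β⁻¹ := by
  rw [← ofReal_integral_eq_lintegral_ofReal (integrableOn_exp_mul_Ioi (by linarith) 0)
    (ae_of_all _ fun t => (Real.exp_pos _).le), integral_exp_mul_Ioi (by linarith)]
  simp

section Homogeneous

variable {E : Type*} [NormedAddCommGroup E] [NormedSpace ℝ E] [FiniteDimensional ℝ E]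
  [MeasurableSpace E] [BorelSpace E] (μ : Measure E) [μ.IsAddHaarMeasure] {ω : E → ℝ} {α : ℝ}

theorem withDensity_smul_set_of_homogeneous (hω : Measurable ω)
    (hhom : ∀ t : ℝ, 0 < t → ∀ x, ω (t • x) = t ^ α * ω x) {t : ℝ} (ht : 0 < t)
    {s : Set E} (hs : MeasurableSet s) :
    μ.withDensity (fun y => ENNReal.ofReal (ω y)) (t • s) =
      ENNReal.ofReal (t ^ (Module.finrank ℝ E + α)) *
        μ.withDensity (fun y => ENNReal.ofReal (ω y)) s := by
  have hg : Measurable (s.indicator fun x => ENNReal.ofReal (ω (t • x))) :=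
    ((hω.comp (measurable_const_smul t)).ennreal_ofReal).indicator hs
  have hg_smul : (fun y => s.indicator (fun x => ENNReal.ofReal (ω (t • x))) (t⁻¹ • y)) =
      (t • s).indicator fun y => ENNReal.ofReal (ω y) := by
    ext y
    rw [← preimage_smul_inv₀ ht.ne', ← indicator_comp_right]
    simp [Function.comp_def, smul_inv_smul₀ ht.ne']
  -- substitute `y = t • x`: the pushforward of `μ` under `t⁻¹ • ·` is `tⁿ • μ`
  rw [withDensity_apply _ (hs.const_smul₀ t), ← lintegral_indicator (hs.const_smul₀ t),
    ← hg_smul, ← lintegral_map hg (measurable_const_smul _),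
    Measure.map_addHaar_smul μ (inv_ne_zero ht.ne'), lintegral_smul_measure,
    lintegral_indicator hs, withDensity_apply _ hs]
  simp_rw [hhom t ht, ENNReal.ofReal_mul (Real.rpow_nonneg ht.le _)]
  rw [lintegral_const_mul _ hω.ennreal_ofReal, smul_eq_mul, ← mul_assoc,
    ← ENNReal.ofReal_mul (by positivity), Real.rpow_add ht, Real.rpow_natCast, inv_pow, inv_inv,
    abs_of_pos (by positivity)]

theorem withDensity_ball_zero_smul_of_homogeneous (hω : Measurable ω)
    (hhom : ∀ t : ℝ, 0 < t → ∀ x, ω (t • x) = t ^ α * ω x) {t : ℝ} (ht : 0 < t) (R : ℝ) :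
    μ.withDensity (fun y => ENNReal.ofReal (ω y)) (ball 0 (t * R)) =
      ENNReal.ofReal (t ^ (Module.finrank ℝ E + α)) *
        μ.withDensity (fun y => ENNReal.ofReal (ω y)) (ball 0 R) := by
  rw [← withDensity_smul_set_of_homogeneous μ hω hhom ht measurableSet_ball,
    _root_.smul_ball ht.ne', smul_zero, Real.norm_of_nonneg ht.le]

end Homogeneous

section LogNorm

variable {E : Type*} [NormedAddCommGroup E] [MeasurableSpace E] [BorelSpace E] {ν : Measure E}

theorem setLIntegral_ball_abs_log_norm_sub_log_eq_lintegral_measure_ball (h0 : ν {0} = 0)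
    {R : ℝ} (hR : 0 < R) :
    ∫⁻ y in ball 0 R, ENNReal.ofReal |Real.log ‖y‖ - Real.log R| ∂ν =
      ∫⁻ t in Ioi 0, ν (ball 0 (Real.exp (-t) * R)) := by
  have hne : ∀ᵐ y ∂ν.restrict (ball 0 R), y ≠ 0 :=
    ae_restrict_of_ae (measure_eq_zero_iff_ae_notMem.1 h0)
  have hlog : ∀ᵐ y ∂ν.restrict (ball 0 R),
      |Real.log ‖y‖ - Real.log R| = Real.log R - Real.log ‖y‖ := by
    filter_upwards [hne, ae_restrict_mem measurableSet_ball] with y hy hyR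
    rw [abs_sub_comm, abs_of_pos (sub_pos.2 (Real.log_lt_log (norm_pos_iff.2 hy)
      (mem_ball_zero_iff.1 hyR)))]
  rw [lintegral_congr_ae (hlog.mono fun y hy => by rw [hy]),
    lintegral_eq_lintegral_meas_lt _ (hlog.mono fun y hy => hy ▸ abs_nonneg _) (by fun_prop)]
  refine setLIntegral_congr_fun measurableSet_Ioi fun t ht => ?_
  -- the superlevel set `{log R - log ‖y‖ > t}` is the ball of radius `e^{-t} R`, up to the origin
  rw [Measure.restrict_apply' measurableSet_ball, ← measure_sdiff_null h0,
    ← measure_sdiff_null (s := ball _ _) h0]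
  congr 1
  ext y
  simp only [mem_sdiff, mem_inter_iff, mem_ofPred_eq, mem_ball_zero_iff, mem_singleton_iff]
  refine and_congr_left fun hy => ?_
  have hy' : 0 < ‖y‖ := norm_pos_iff.2 hy
  have hexp : Real.exp (-t) * R = Real.exp (Real.log R - t) := by
    rw [Real.exp_sub, Real.exp_log hR, Real.exp_neg, div_eq_mul_inv, mul_comm]
  rw [hexp, ← Real.log_lt_iff_lt_exp hy']
  constructor
  · rintro ⟨h, -⟩
    linarith
  · intro h
    exact ⟨by linarith, (Real.log_lt_log_iff hy' hR).1 (by linarith [mem_Ioi.1 ht])⟩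

theorem setLIntegral_ball_abs_log_norm_sub_log_eq (h0 : ν {0} = 0) {β : ℝ} (hβ : 0 < β)
    (hscale : ∀ t : ℝ, 0 < t → ∀ R, ν (ball 0 (t * R)) = ENNReal.ofReal (t ^ β) * ν (ball 0 R))
    {R : ℝ} (hR : 0 < R) :
    ∫⁻ y in ball 0 R, ENNReal.ofReal |Real.log ‖y‖ - Real.log R| ∂ν =
      ENNReal.ofReal β⁻¹ * ν (ball 0 R) := by
  rw [setLIntegral_ball_abs_log_norm_sub_log_eq_lintegral_measure_ball h0 hR,
    ← lintegral_Ioi_ofReal_exp_neg_mul hβ, ← lintegral_mul_const _ (by fun_prop)]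
  refine setLIntegral_congr_fun measurableSet_Ioi fun t _ => ?_
  rw [hscale _ (Real.exp_pos _), ← Real.exp_mul, neg_mul, neg_mul, mul_comm t]

theorem memBMO_log_norm (h0 : ν {0} = 0) {β : ℝ} (hβ : 0 < β)
    (hscale : ∀ t : ℝ, 0 < t → ∀ R, ν (ball 0 (t * R)) = ENNReal.ofReal (t ^ β) * ν (ball 0 R))
    {C : ℝ≥0∞} (hCtop : C ≠ ⊤)
    (hC : ∀ (x : E) (r : ℝ), 0 < r → ν (ball x (2 * r)) ≤ C * ν (ball x r)) :
    MemBMO ν fun y => Real.log ‖y‖ := by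
  refine ⟨max 1 (C ^ 3 * ENNReal.ofReal β⁻¹), by finiteness, fun x r hr => ?_⟩
  rcases le_or_gt (2 * r) ‖x‖ with hfar | hnear
  · refine ⟨Real.log ‖x‖, ?_⟩
    calc ∫⁻ y in ball x r, ENNReal.ofReal |Real.log ‖y‖ - Real.log ‖x‖| ∂ν
        ≤ ∫⁻ _ in ball x r, 1 ∂ν := setLIntegral_mono' measurableSet_ball fun y hy =>
          ENNReal.ofReal_le_one.2 (abs_log_norm_sub_log_norm_le_one hfar hy)
      _ = ν (ball x r) := setLIntegral_one _
      _ ≤ _ := le_mul_of_one_le_left' (le_max_left _ _)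
  · refine ⟨Real.log (3 * r), ?_⟩
    have hinner : ball x r ⊆ ball 0 (3 * r) := ball_subset_ball' (by
      rw [dist_zero_right]; linarith)
    have houter : ball 0 (3 * r) ⊆ ball x (8 * r) := ball_subset_ball' (by
      rw [dist_zero_left]; linarith)
    calc ∫⁻ y in ball x r, ENNReal.ofReal |Real.log ‖y‖ - Real.log (3 * r)| ∂ν
        ≤ ∫⁻ y in ball 0 (3 * r), ENNReal.ofReal |Real.log ‖y‖ - Real.log (3 * r)| ∂ν :=
          lintegral_mono_set hinner
      _ = ENNReal.ofReal β⁻¹ * ν (ball 0 (3 * r)) :=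
          setLIntegral_ball_abs_log_norm_sub_log_eq h0 hβ hscale (by positivity)
      _ ≤ ENNReal.ofReal β⁻¹ * (C ^ 3 * ν (ball x r)) := by
          gcongr
          exact (measure_mono houter).trans (measure_ball_eight_mul_le_of_doubling hC x hr)
      _ ≤ _ := by
          rw [← mul_assoc, mul_comm (ENNReal.ofReal _)]
          gcongr
          exact le_max_right _ _

end LogNorm

theorem setLIntegral_ofReal_mul_eq_setLIntegral_withDensity {X : Type*} [MeasurableSpace X]
    (μ : Measure X) {ω g : X → ℝ} (hω : Measurable ω) (hg : Measurable g) (hg0 : 0 ≤ g)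
    {s : Set X} (hs : MeasurableSet s) :
    ∫⁻ y in s, ENNReal.ofReal (g y * ω y) ∂μ =
      ∫⁻ y in s, ENNReal.ofReal (g y) ∂μ.withDensity fun y => ENNReal.ofReal (ω y) := by
  rw [setLIntegral_withDensity_eq_setLIntegral_mul _ hω.ennreal_ofReal hg.ennreal_ofReal hs]
  simp only [Pi.mul_apply, ← ENNReal.ofReal_mul' (hg0 _), mul_comm]

theorem log_mem_BMO_general (d : ℕ) (hd : 0 < d) (α : ℝ) (hα : -(d : ℝ) < α)
    (ω : EuclideanSpace ℝ (Fin d) → ℝ) (hω : memW d α ω)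
    (hdoub : ∃ C : ℝ≥0∞, C ≠ ⊤ ∧ ∀ (x : EuclideanSpace ℝ (Fin d)) (r : ℝ), 0 < r →
      (∫⁻ y in Metric.ball x (2 * r), ENNReal.ofReal (ω y)) ≤
        C * ∫⁻ y in Metric.ball x r, ENNReal.ofReal (ω y)) :
    ∃ M : ℝ≥0∞, M ≠ ⊤ ∧ ∀ (x : EuclideanSpace ℝ (Fin d)) (r : ℝ), 0 < r →
      ∃ c : ℝ,
        (∫⁻ y in Metric.ball x r, ENNReal.ofReal (|Real.log ‖y‖ - c| * ω y)) ≤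
          M * ∫⁻ y in Metric.ball x r, ENNReal.ofReal (ω y) := by
  obtain ⟨hmeas, -, hhom, -, -⟩ := hω
  obtain ⟨C, hCtop, hC⟩ := hdoub
  have : NeZero d := ⟨hd.ne'⟩
  set ν := (volume : Measure (EuclideanSpace ℝ (Fin d))).withDensity fun y => ENNReal.ofReal (ω y)
  have hν : ∀ x r, ∫⁻ y in ball x r, ENNReal.ofReal (ω y) = ν (ball x r) := fun x r =>
    (withDensity_apply _ measurableSet_ball).symm
  have hscale : ∀ t : ℝ, 0 < t → ∀ R,
      ν (ball 0 (t * R)) = ENNReal.ofReal (t ^ ((d : ℝ) + α)) * ν (ball 0 R) := by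
    intro t ht R
    rw [withDensity_ball_zero_smul_of_homogeneous _ hmeas
      (fun t ht x => by rw [hhom t ht.ne', abs_of_pos ht]) ht, finrank_euclideanSpace_fin]
  obtain ⟨M, hM, hosc⟩ := memBMO_log_norm
    (withDensity_absolutelyContinuous _ _ (measure_singleton 0)) (by linarith) hscale hCtop
    (by simpa only [hν] using hC)
  refine ⟨M, hM, fun x r hr => ?_⟩
  obtain ⟨c, hc⟩ := hosc x r hr
  refine ⟨c, ?_⟩
  rwa [hν, setLIntegral_ofReal_mul_eq_setLIntegral_withDensity _ hmeas (by fun_prop)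
    (fun _ => abs_nonneg _) measurableSet_ball]

/-- If `ω ∈ W_α` (`α > -d`) is locally integrable and doubling, then `log|x| ∈ BMO(ω)`:
for every ball there is a constant whose mean oscillation is uniformly bounded. -/
theorem log_mem_BMO (d : ℕ) (hd : 0 < d) (α : ℝ) (hα : -(d : ℝ) < α)
    (ω : EuclideanSpace ℝ (Fin d) → ℝ) (hω : memW d α ω)
    (hloc : LocallyIntegrable ω (volume : Measure (EuclideanSpace ℝ (Fin d))))
    (hdoub : ∃ C : ℝ≥0∞, C ≠ ⊤ ∧ ∀ (x : EuclideanSpace ℝ (Fin d)) (r : ℝ), 0 < r →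
      (∫⁻ y in Metric.ball x (2 * r), ENNReal.ofReal (ω y)) ≤
        C * ∫⁻ y in Metric.ball x r, ENNReal.ofReal (ω y)) :
    ∃ M : ℝ≥0∞, M ≠ ⊤ ∧ ∀ (x : EuclideanSpace ℝ (Fin d)) (r : ℝ), 0 < r →
      ∃ c : ℝ,
        (∫⁻ y in Metric.ball x r, ENNReal.ofReal (|Real.log ‖y‖ - c| * ω y)) ≤
          M * ∫⁻ y in Metric.ball x r, ENNReal.ofReal (ω y) :=
  log_mem_BMO_general d hd α hα ω hω hdoub
end

section
/- Let 1 < p < ∞, −1/p ≤ λ < 0, and ω ∈ W_α with α > −d. Then the weighted central Morrey space Ḃ^{p,λ}_ω(ℝ^d), with norm ‖f‖ = sup_{R>0} (ω(B(0,R))^{−(1+λp)} ∫_{B(0,R)} |f|^p ω dx)^{1/p}, is a normed space, and if λ < −1/p then Ḃ^{p,λ}_ω(ℝ^d) = {0}. -/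
/-!
Polar coordinates and the `α`-homogeneity of `ω` give `ω(B(0,R)) = c_ω R^(α+d)/(α+d)` with
`0 < c_ω < ∞`. The `R`-th term of the Morrey functional is `ω(B(0,R))^(-(1+λp)/p)` times the
`L^p` norm of `f` for the measure `ω dx` restricted to `B(0,R)`, so homogeneity and the triangle
inequality are those of `L^p` norms, and since `ω > 0` a.e. the functional vanishes iff `f`
vanishes a.e. on every ball. When `λ < -1/p` the exponent `(1+λp)/p` is negative, so for
`R₀ ≤ R` a finite Morrey norm `N` gives `‖f‖_{L^p_ω(B(0,R₀))} ≤ N ω(B(0,R))^((1+λp)/p)`,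
which tends to `0` as `R → ∞`.
-/

open MeasureTheory Metric Set ENNReal

open Filter Topology

theorem lintegral_Ioo_ofReal_rpow {s R : ℝ} (hs : -1 < s) (hR : 0 ≤ R) :
    ∫⁻ a in Ioo 0 R, ENNReal.ofReal (a ^ s) = ENNReal.ofReal (R ^ (s + 1) / (s + 1)) := by
  have hint : IntegrableOn (fun a : ℝ => a ^ s) (Ioc 0 R) :=
    (intervalIntegral.intervalIntegrable_rpow' hs).1
  have hnonneg : 0 ≤ᵐ[volume.restrict (Ioc 0 R)] fun a : ℝ => a ^ s := by
    filter_upwards [ae_restrict_mem measurableSet_Ioc] with a ha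
    exact Real.rpow_nonneg ha.1.le s
  rw [Measure.restrict_congr_set Ioo_ae_eq_Ioc,
    ← ofReal_integral_eq_lintegral_ofReal hint hnonneg, ← intervalIntegral.integral_of_le hR,
    integral_rpow (Or.inl hs),
    Real.zero_rpow (by linarith), sub_zero]

theorem lintegral_volumeIoiPow_indicator_rpow (n : ℕ) {α R : ℝ} (hα : -((n : ℝ) + 1) < α)
    (hR : 0 ≤ R) :
    ∫⁻ r : Ioi (0 : ℝ), (Iio R).indicator (fun a => ENNReal.ofReal (a ^ α)) (r : ℝ)
        ∂Measure.volumeIoiPow n =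
      ENNReal.ofReal (R ^ (α + (n + 1)) / (α + (n + 1))) := by
  rw [Measure.volumeIoiPow, lintegral_withDensity_eq_lintegral_mul_non_measurable _ (by fun_prop)
      (ae_of_all _ fun _ => ofReal_lt_top)]
  simp only [Pi.mul_apply]
  rw [lintegral_subtype_comap measurableSet_Ioi fun a : ℝ =>
    ENNReal.ofReal (a ^ n) * (Iio R).indicator (fun a => ENNReal.ofReal (a ^ α)) a]
  have hcombine : ∀ a ∈ Ioi (0 : ℝ),
      ENNReal.ofReal (a ^ n) * (Iio R).indicator (fun a => ENNReal.ofReal (a ^ α)) a =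
        (Iio R).indicator (fun a => ENNReal.ofReal (a ^ (α + n))) a := by
    intro a (ha : 0 < a)
    by_cases haR : a ∈ Iio R
    · rw [indicator_of_mem haR, indicator_of_mem haR, ← ENNReal.ofReal_mul (by positivity),
        ← Real.rpow_natCast, ← Real.rpow_add ha, add_comm]
    · rw [indicator_of_notMem haR, indicator_of_notMem haR, mul_zero]
  rw [setLIntegral_congr_fun measurableSet_Ioi hcombine, lintegral_indicator measurableSet_Iio,
    Measure.restrict_restrict measurableSet_Iio, Iio_inter_Ioi,
    lintegral_Ioo_ofReal_rpow (by linarith) hR, add_assoc]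

theorem lintegral_ball_eq_of_homogeneous {E : Type*} [NormedAddCommGroup E] [NormedSpace ℝ E]
    [FiniteDimensional ℝ E] [Nontrivial E] [MeasurableSpace E] [BorelSpace E] (μ : Measure E)
    [μ.IsAddHaarMeasure] {g : E → ℝ≥0∞} (hg : Measurable g) {α : ℝ}
    (hα : -(Module.finrank ℝ E : ℝ) < α)
    (hhom : ∀ t : ℝ, 0 < t → ∀ x, g (t • x) = ENNReal.ofReal (t ^ α) * g x)
    {R : ℝ} (hR : 0 < R) :
    ∫⁻ x in ball 0 R, g x ∂μ =
      (∫⁻ θ, g θ ∂μ.toSphere) *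
        ENNReal.ofReal (R ^ (α + Module.finrank ℝ E) / (α + Module.finrank ℝ E)) := by
  have hdim : ((Module.finrank ℝ E - 1 : ℕ) : ℝ) + 1 = Module.finrank ℝ E := by
    rw [Nat.cast_pred Module.finrank_pos, sub_add_cancel]
  have hpolar : ∫⁻ x in ball 0 R, g x ∂μ =
      ∫⁻ y, g y.1 * (Iio R).indicator (fun a => ENNReal.ofReal (a ^ α)) (y.2 : ℝ)
        ∂μ.toSphere.prod (.volumeIoiPow (Module.finrank ℝ E - 1)) := by
    conv_lhs => rw [← lintegral_indicator measurableSet_ball,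
      ← restrict_compl_singleton (μ := μ) (0 : E),
      ← lintegral_subtype_comap (measurableSet_singleton 0).compl]
    rw [← (μ.measurePreserving_homeomorphUnitSphereProd).lintegral_comp_emb
        (Homeomorph.measurableEmbedding _)]
    refine lintegral_congr fun x => ?_
    have hx : 0 < ‖(x : E)‖ := norm_pos_iff.2 x.2
    by_cases hxR : ‖(x : E)‖ ∈ Iio R
    · rw [indicator_of_mem (mem_ball_zero_iff.2 hxR)]
      simp only [homeomorphUnitSphereProd_apply_fst_coe, homeomorphUnitSphereProd_apply_snd_coe]
      rw [indicator_of_mem hxR, mul_comm, ← hhom _ hx, smul_inv_smul₀ hx.ne']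
    · rw [indicator_of_notMem (by simpa [mem_ball_zero_iff] using hxR)]
      simp only [homeomorphUnitSphereProd_apply_snd_coe]
      rw [indicator_of_notMem hxR, mul_zero]
  have hradial : Measurable ((Iio R).indicator fun a : ℝ => ENNReal.ofReal (a ^ α)) :=
    (by fun_prop : Measurable fun a : ℝ => ENNReal.ofReal (a ^ α)).indicator measurableSet_Iio
  rw [hpolar, lintegral_prod_mul (f := fun θ : sphere (0 : E) 1 => g θ)
      (g := fun r : Ioi (0 : ℝ) => (Iio R).indicator (fun a => ENNReal.ofReal (a ^ α)) (r : ℝ))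
      (hg.comp measurable_subtype_coe).aemeasurable
      (hradial.comp measurable_subtype_coe).aemeasurable,
    lintegral_volumeIoiPow_indicator_rpow _ (by rwa [hdim]) hR.le, hdim]

noncomputable def weightedVolume (d : ℕ) (ω : EuclideanSpace ℝ (Fin d) → ℝ) :
    Measure (EuclideanSpace ℝ (Fin d)) :=
  volume.withDensity fun x => ENNReal.ofReal (ω x)

section WeightedMorrey

variable {d : ℕ} {ω : EuclideanSpace ℝ (Fin d) → ℝ} {p lam : ℝ}

theorem restrict_weightedVolume_absolutelyContinuous (s : Set (EuclideanSpace ℝ (Fin d))) :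
    (weightedVolume d ω).restrict s ≪ volume :=
  (Measure.absolutelyContinuous_of_le Measure.restrict_le_self).trans
    (withDensity_absolutelyContinuous _ _)

theorem lintegral_restrict_weightedVolume (hω : Measurable ω) (R : ℝ)
    (g : EuclideanSpace ℝ (Fin d) → ℝ≥0∞) :
    ∫⁻ x in ball 0 R, g x ∂weightedVolume d ω =
      ∫⁻ x in ball 0 R, g x * ENNReal.ofReal (ω x) := by
  rw [weightedVolume, restrict_withDensity measurableSet_ball,
    lintegral_withDensity_eq_lintegral_mul_non_measurable _ (by fun_prop)
      (ae_of_all _ fun _ => ofReal_lt_top)]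
  simp only [Pi.mul_apply, mul_comm]

theorem morreyNorm_eq_iSup_eLpNorm' (hω : Measurable ω) (hp : 0 < p)
    (f : EuclideanSpace ℝ (Fin d) → ℂ) :
    morreyNorm d p lam ω f = ⨆ (R : ℝ) (_ : 0 < R),
      wBall d ω R ^ (-(1 + lam * p) / p) *
        eLpNorm' f p ((weightedVolume d ω).restrict (ball 0 R)) := by
  refine iSup_congr fun R => iSup_congr fun _ => ?_
  rw [ENNReal.mul_rpow_of_nonneg _ _ (by positivity), ← ENNReal.rpow_mul, ← div_eq_mul_one_div,
    eLpNorm', lintegral_restrict_weightedVolume hω]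
  rfl

theorem le_morreyNorm (hω : Measurable ω) (hp : 0 < p) (f : EuclideanSpace ℝ (Fin d) → ℂ)
    {R : ℝ} (hR : 0 < R) :
    wBall d ω R ^ (-(1 + lam * p) / p) *
        eLpNorm' f p ((weightedVolume d ω).restrict (ball 0 R)) ≤
      morreyNorm d p lam ω f := by
  rw [morreyNorm_eq_iSup_eLpNorm' hω hp]
  exact le_iSup₂ (f := fun R (_ : 0 < R) => wBall d ω R ^ (-(1 + lam * p) / p) *
    eLpNorm' f p ((weightedVolume d ω).restrict (ball 0 R))) R hR

theorem morreyNorm_const_mul (hω : Measurable ω) (hp : 0 < p) (c : ℂ)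
    (f : EuclideanSpace ℝ (Fin d) → ℂ) :
    morreyNorm d p lam ω (fun x => c * f x) = ‖c‖₊ * morreyNorm d p lam ω f := by
  simp only [morreyNorm_eq_iSup_eLpNorm' hω hp, ENNReal.mul_iSup]
  refine iSup_congr fun R => iSup_congr fun _ => ?_
  rw [show (fun x => c * f x) = c • f from rfl, eLpNorm'_const_smul c hp, mul_left_comm]
  rfl

theorem morreyNorm_add_le (hω : Measurable ω) (hp : 1 ≤ p)
    {f g : EuclideanSpace ℝ (Fin d) → ℂ} (hf : AEMeasurable f) (hg : AEMeasurable g) :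
    morreyNorm d p lam ω (fun x => f x + g x) ≤
      morreyNorm d p lam ω f + morreyNorm d p lam ω g := by
  have hp0 : 0 < p := by linarith
  rw [morreyNorm_eq_iSup_eLpNorm' hω hp0]
  refine iSup₂_le fun R hR => ?_
  have hac := restrict_weightedVolume_absolutelyContinuous (ω := ω) (ball 0 R)
  calc wBall d ω R ^ (-(1 + lam * p) / p) *
        eLpNorm' (f + g) p ((weightedVolume d ω).restrict (ball 0 R))
      ≤ wBall d ω R ^ (-(1 + lam * p) / p) *
        (eLpNorm' f p ((weightedVolume d ω).restrict (ball 0 R)) +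
          eLpNorm' g p ((weightedVolume d ω).restrict (ball 0 R))) := by
        gcongr
        exact eLpNorm'_add_le (hf.aestronglyMeasurable.mono_ac hac)
          (hg.aestronglyMeasurable.mono_ac hac) hp
    _ ≤ morreyNorm d p lam ω f + morreyNorm d p lam ω g := by
        rw [mul_add]
        exact add_le_add (le_morreyNorm hω hp0 f hR) (le_morreyNorm hω hp0 g hR)

theorem ae_eq_zero_iff_forall_ball (hω : Measurable ω) (hpos : ∀ᵐ x, 0 < ω x)
    {f : EuclideanSpace ℝ (Fin d) → ℂ} :
    f =ᵐ[volume] 0 ↔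
      ∀ R : ℝ, 0 < R → f =ᵐ[(weightedVolume d ω).restrict (ball 0 R)] 0 := by
  refine ⟨fun h R _ => (restrict_weightedVolume_absolutelyContinuous _).ae_le h, fun h => ?_⟩
  have hac : volume ≪ weightedVolume d ω :=
    withDensity_absolutelyContinuous' (by fun_prop)
      (hpos.mono fun x hx => (ENNReal.ofReal_pos.2 hx).ne')
  refine hac.ae_le ?_
  have hballs :
      ∀ᵐ x ∂(weightedVolume d ω).restrict (⋃ n : ℕ, ball 0 ((n : ℝ) + 1)), f x = 0 :=
    (ae_restrict_iUnion_iff _ _).2 fun n => h _ n.cast_add_one_pos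
  rwa [iUnion_ball_nat_succ, Measure.restrict_univ] at hballs

theorem morreyNorm_eq_zero_iff (hω : Measurable ω) (hpos : ∀ᵐ x, 0 < ω x) (hp : 0 < p)
    (hlam : -(1 / p) ≤ lam) (hfin : ∀ R : ℝ, 0 < R → wBall d ω R ≠ ⊤)
    {f : EuclideanSpace ℝ (Fin d) → ℂ} (hf : AEMeasurable f) :
    morreyNorm d p lam ω f = 0 ↔ f =ᵐ[volume] 0 := by
  have hexp : -(1 + lam * p) / p ≤ 0 := by
    have := mul_le_mul_of_nonneg_right hlam hp.le
    rw [neg_mul, one_div_mul_cancel hp.ne'] at this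
    exact div_nonpos_of_nonpos_of_nonneg (by linarith) hp.le
  rw [morreyNorm_eq_iSup_eLpNorm' hω hp, ae_eq_zero_iff_forall_ball hω hpos]
  simp only [ENNReal.iSup_eq_zero]
  refine forall₂_congr fun R hR => ?_
  have hfactor : wBall d ω R ^ (-(1 + lam * p) / p) ≠ 0 := by
    simp only [ne_eq, ENNReal.rpow_eq_zero_iff, not_or, not_and, not_lt]
    exact ⟨fun _ => hexp, fun h => absurd h (hfin R hR)⟩
  rw [mul_eq_zero, or_iff_right hfactor, eLpNorm'_eq_zero_iff hp
    (hf.aestronglyMeasurable.mono_ac (restrict_weightedVolume_absolutelyContinuous _))]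

theorem ae_eq_zero_of_morreyNorm_ne_top (hω : Measurable ω) (hpos : ∀ᵐ x, 0 < ω x)
    (hp : 0 < p) (hlam : lam < -(1 / p)) (hw : ∀ R : ℝ, 0 < R → wBall d ω R ≠ 0)
    (hw_tendsto : Tendsto (wBall d ω) atTop (𝓝 ⊤)) {f : EuclideanSpace ℝ (Fin d) → ℂ}
    (hf : AEMeasurable f) (hN : morreyNorm d p lam ω f ≠ ⊤) :
    f =ᵐ[volume] 0 := by
  set a := -(1 + lam * p) / p
  have ha : 0 < a := by
    have := mul_lt_mul_of_pos_right hlam hp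
    rw [neg_mul, one_div_mul_cancel hp.ne'] at this
    exact div_pos (by linarith) hp
  rw [ae_eq_zero_iff_forall_ball hω hpos]
  intro R₀ hR₀
  rw [← eLpNorm'_eq_zero_iff hp
    (hf.aestronglyMeasurable.mono_ac (restrict_weightedVolume_absolutelyContinuous _))]
  have hbound : ∀ R, R₀ ≤ R →
      eLpNorm' f p ((weightedVolume d ω).restrict (ball 0 R₀)) ≤
      morreyNorm d p lam ω f * wBall d ω R ^ (-a) := by
    intro R hR
    have hR0 : 0 < R := hR₀.trans_le hR
    calc eLpNorm' f p ((weightedVolume d ω).restrict (ball 0 R₀))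
        ≤ eLpNorm' f p ((weightedVolume d ω).restrict (ball 0 R)) :=
          eLpNorm'_mono_measure f (Measure.restrict_mono (ball_subset_ball hR) le_rfl) hp.le
      _ ≤ morreyNorm d p lam ω f / wBall d ω R ^ a := by
          have hfactor := ENNReal.rpow_pos_of_nonneg (pos_iff_ne_zero.2 (hw R hR0)) ha.le
          rw [ENNReal.le_div_iff_mul_le (Or.inl hfactor.ne') (Or.inr hN), mul_comm]
          exact le_morreyNorm hω hp f hR0
      _ = morreyNorm d p lam ω f * wBall d ω R ^ (-a) := by
          rw [div_eq_mul_inv, ENNReal.rpow_neg]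
  have hlim : Tendsto (fun R => morreyNorm d p lam ω f * wBall d ω R ^ (-a)) atTop (𝓝 0) := by
    have hpow := ((ENNReal.continuous_rpow_const (y := -a)).tendsto ⊤).comp hw_tendsto
    rw [ENNReal.top_rpow_of_neg (by linarith)] at hpow
    simpa using ENNReal.Tendsto.const_mul hpow (Or.inr hN)
  exact nonpos_iff_eq_zero.1 (ge_of_tendsto hlim ((eventually_ge_atTop R₀).mono hbound))

end WeightedMorrey

namespace memW

variable {d : ℕ} {α : ℝ} {ω : EuclideanSpace ℝ (Fin d) → ℝ}

theorem wBall_eq (hω : memW d α ω) (hd : 0 < d) (hα : -(d : ℝ) < α) {R : ℝ} (hR : 0 < R) :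
    wBall d ω R = sphereInt d ω * ENNReal.ofReal (R ^ (α + d) / (α + d)) := by
  have hfinrank := finrank_euclideanSpace_fin (𝕜 := ℝ) (n := d)
  have : Nontrivial (EuclideanSpace ℝ (Fin d)) :=
    Module.nontrivial_of_finrank_pos (hfinrank ▸ hd)
  have hhom : ∀ t : ℝ, 0 < t → ∀ x, ENNReal.ofReal (ω (t • x)) =
      ENNReal.ofReal (t ^ α) * ENNReal.ofReal (ω x) := fun t ht x => by
    rw [hω.2.2.1 t ht.ne', abs_of_pos ht, ENNReal.ofReal_mul (by positivity)]
  have h := lintegral_ball_eq_of_homogeneous volume hω.1.ennreal_ofReal (by rwa [hfinrank]) hhom hR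
  rwa [hfinrank] at h

theorem wBall_ne_zero (hω : memW d α ω) (hd : 0 < d) (hα : -(d : ℝ) < α) {R : ℝ}
    (hR : 0 < R) :
    wBall d ω R ≠ 0 := by
  have hαd : 0 < α + d := by linarith
  rw [hω.wBall_eq hd hα hR]
  exact mul_ne_zero hω.2.2.2.1.ne' (ENNReal.ofReal_pos.2 (by positivity)).ne'

theorem wBall_ne_top (hω : memW d α ω) (hd : 0 < d) (hα : -(d : ℝ) < α) {R : ℝ}
    (hR : 0 < R) :
    wBall d ω R ≠ ⊤ := by
  rw [hω.wBall_eq hd hα hR]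
  exact ENNReal.mul_ne_top hω.2.2.2.2.ne ENNReal.ofReal_ne_top

theorem tendsto_wBall_atTop (hω : memW d α ω) (hd : 0 < d) (hα : -(d : ℝ) < α) :
    Tendsto (wBall d ω) atTop (𝓝 ⊤) := by
  have hαd : 0 < α + d := by linarith
  have hradial :
      Tendsto (fun R : ℝ => ENNReal.ofReal (R ^ (α + d) / (α + d))) atTop (𝓝 ⊤) :=
    ENNReal.tendsto_ofReal_atTop.comp ((tendsto_rpow_atTop hαd).atTop_div_const hαd)
  have hlim := ENNReal.Tendsto.const_mul (a := sphereInt d ω) hradial (Or.inl top_ne_zero)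
  rw [ENNReal.mul_top hω.2.2.2.1.ne'] at hlim
  exact hlim.congr' ((eventually_gt_atTop 0).mono fun R hR => (hω.wBall_eq hd hα hR).symm)

end memW

/-- For `1 < p < ∞`, `-1/p ≤ λ < 0` and `ω ∈ W_α` (`α > -d`), the weighted central
Morrey functional is a norm (homogeneous, subadditive, vanishing exactly on a.e.-null
functions); and for `λ < -1/p` the space `Ḃ^{p,λ}_ω(ℝ^d)` is trivial. -/
theorem morrey_normed_and_trivial (d : ℕ) (hd : 0 < d) (α : ℝ) (hα : -(d : ℝ) < α)
    (ω : EuclideanSpace ℝ (Fin d) → ℝ) (hω : memW d α ω) (p : ℝ) (hp : 1 < p) :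
    (∀ lam : ℝ, -(1 / p) ≤ lam → lam < 0 →
      (∀ (c : ℂ) (f : EuclideanSpace ℝ (Fin d) → ℂ), AEMeasurable f →
        morreyNorm d p lam ω (fun x => c * f x) = (‖c‖₊ : ℝ≥0∞) * morreyNorm d p lam ω f) ∧
      (∀ f g : EuclideanSpace ℝ (Fin d) → ℂ, AEMeasurable f → AEMeasurable g →
        morreyNorm d p lam ω (fun x => f x + g x) ≤
          morreyNorm d p lam ω f + morreyNorm d p lam ω g) ∧
      (∀ f : EuclideanSpace ℝ (Fin d) → ℂ, AEMeasurable f →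
        (morreyNorm d p lam ω f = 0 ↔ f =ᵐ[volume] 0))) ∧
    (∀ lam : ℝ, lam < -(1 / p) →
      ∀ f : EuclideanSpace ℝ (Fin d) → ℂ, AEMeasurable f →
        morreyNorm d p lam ω f ≠ ⊤ → f =ᵐ[volume] 0) := by
  have hp0 : 0 < p := by linarith
  have hmeas : Measurable ω := hω.1
  have hpos : ∀ᵐ x, 0 < ω x := hω.2.1
  refine ⟨fun lam hlam _ => ⟨fun c f _ => morreyNorm_const_mul hmeas hp0 c f,
      fun f g hf hg => morreyNorm_add_le hmeas hp.le hf hg,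
      fun f hf => morreyNorm_eq_zero_iff hmeas hpos hp0 hlam
        (fun R hR => hω.wBall_ne_top hd hα hR) hf⟩,
    fun lam hlam f hf hN => ae_eq_zero_of_morreyNorm_ne_top hmeas hpos hp0 hlam
      (fun R hR => hω.wBall_ne_zero hd hα hR) (hω.tendsto_wBall_atTop hd hα) hf hN⟩
end
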